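/- arXiv:1803.11489 — 3 statements merged into one kernel-verified Lean document; each statement's English description precedes it below -/
import Mathlib

section
/- Let Q be a complex N×N matrix with spectral radius of the entrywise absolute value matrix |Q| strictly less than 1, let G = (I − Q)^{-1}, and for k ∈ [N] let Q_k denote the restriction of Q to rows and columns with indices ≥ k and G_k = (I − Q_k)^{-1}. Then det G = ∏_{k=1}^N G_k(k,k), where G_k(k,k) is the (k,k) entry of G_k. -/
/-!
By Cramer's rule the `(k, k)` entry of `(I - Q_k)⁻¹` is `det (I - Q_{k+1}) / det (I - Q_k)`,
so the product telescopes to `1 / det (I - Q) = det G`, provided these principal minors do not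
vanish. If `Q_S v = v` for a principal submatrix `Q_S`, then `w = |v|`, extended by zero,
satisfies `w ≤ |Q| w`, hence `w ≤ |Q|ⁿ w` for all `n`. Since `ρ(|Q|) < 1`, Gelfand's formula
gives `|Q|ⁿ → 0`, so `w = 0` and `v = 0`.
-/

open Matrix Function Filter Topology

theorem Finset.prod_range_div₀ {G₀ : Type*} [CommGroupWithZero G₀] (f : ℕ → G₀)
    (hf : ∀ i, f i ≠ 0) (n : ℕ) : ∏ i ∈ range n, f (i + 1) / f i = f n / f 0 := by
  induction n with
  | zero => simp [div_self (hf 0)]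
  | succ n ih => rw [prod_range_succ, ih, mul_comm, div_mul_div_cancel₀ (hf n)]

theorem spectrum.tendsto_pow_nhds_zero_of_spectralRadius_lt_one {A : Type*} [NormedRing A]
    [NormedAlgebra ℂ A] [CompleteSpace A] {a : A} (ha : spectralRadius ℂ a < 1) :
    Tendsto (a ^ ·) atTop (𝓝 0) := by
  obtain ⟨c, hρc, hc1⟩ := ENNReal.lt_iff_exists_nnreal_btwn.mp ha
  have hbound : ∀ᶠ n : ℕ in atTop, ‖a ^ n‖₊ ≤ c ^ n := by
    filter_upwards [eventually_gt_atTop 0,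
      (pow_nnnorm_pow_one_div_tendsto_nhds_spectralRadius a).eventually_lt_const hρc] with n hn0 hn
    rw [one_div, ← ENNReal.coe_rpow_of_nonneg _ (by positivity), ENNReal.coe_lt_coe,
      NNReal.rpow_inv_lt_iff (by positivity), NNReal.rpow_natCast] at hn
    exact hn.le
  refine squeeze_zero_norm' ?_ <|
    tendsto_pow_atTop_nhds_zero_of_lt_one c.2 (by exact_mod_cast hc1)
  filter_upwards [hbound] with n hn
  exact_mod_cast hn

namespace Matrix

section Cofactor

variable {ι : Type*} [Fintype ι] [DecidableEq ι]

theorem det_updateRow_single_self {R : Type*} [CommRing R] (M : Matrix ι ι R) (i : ι) :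
    (M.updateRow i (Pi.single i 1)).det =
      (M.submatrix ((↑) : {j // j ≠ i} → ι) (↑)).det := by
  rw [twoBlockTriangular_det' _ (· = i)]
  · have hone : toSquareBlockProp (M.updateRow i (Pi.single i 1)) (· = i) = 1 := by
      ext ⟨a, rfl⟩ ⟨b, rfl⟩
      simp [toSquareBlockProp_def]
    simp only [hone, det_one, one_mul]
    congr 1
    ext a b
    simp [toSquareBlockProp_def, updateRow_ne a.2]
  · rintro a rfl j hj
    simp [hj]

theorem inv_apply_self {K : Type*} [Field K] (M : Matrix ι ι K) (i : ι) :
    M⁻¹ i i = M.det⁻¹ * (M.submatrix ((↑) : {j // j ≠ i} → ι) (↑)).det := by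
  rw [inv_def, smul_apply, adjugate_apply, det_updateRow_single_self, Ring.inverse_eq_inv',
    smul_eq_mul]

end Cofactor

section TailMinor

variable {N : ℕ} {R : Type*} [CommRing R]

/-- Indexed by `ℕ` rather than `Fin N` so that the empty minor `tailMinor A N = 1` closes the
telescoping product. -/
def tailMinor (A : Matrix (Fin N) (Fin N) R) (n : ℕ) : R :=
  (A.submatrix ((↑) : {j : Fin N // n ≤ (j : ℕ)} → Fin N) (↑)).det

theorem tailMinor_zero (A : Matrix (Fin N) (Fin N) R) : A.tailMinor 0 = A.det :=
  det_submatrix_equiv_self (Equiv.subtypeUnivEquiv fun _ => Nat.zero_le _) A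

theorem tailMinor_of_le (A : Matrix (Fin N) (Fin N) R) {n : ℕ} (hn : N ≤ n) :
    A.tailMinor n = 1 :=
  haveI : IsEmpty {j : Fin N // n ≤ (j : ℕ)} := ⟨fun j => (hn.trans j.2).not_gt j.1.isLt⟩
  det_isEmpty

variable {K : Type*} [Field K]

theorem inv_submatrix_Ici_apply_self (A : Matrix (Fin N) (Fin N) K) (k : Fin N) :
    (A.submatrix (Subtype.val : {j : Fin N // k ≤ j} → Fin N) Subtype.val)⁻¹
        ⟨k, le_rfl⟩ ⟨k, le_rfl⟩ = A.tailMinor (k + 1) / A.tailMinor k := by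
  rw [inv_apply_self, submatrix_submatrix, div_eq_inv_mul]
  congr 1
  let σ : {x : {j : Fin N // k ≤ j} // x ≠ ⟨k, le_rfl⟩} ≃
      {j : Fin N // (k : ℕ) + 1 ≤ j} :=
    (Equiv.subtypeSubtypeEquivSubtypeExists _ _).trans <| Equiv.subtypeEquivRight fun _ => by
      simp only [ne_eq, Subtype.mk.injEq, Fin.le_def, Fin.ext_iff, exists_prop]
      omega
  rw [tailMinor, ← det_submatrix_equiv_self σ, submatrix_submatrix]
  rfl

theorem det_nonsing_inv_eq_prod_inv_submatrix_Ici_apply_self (A : Matrix (Fin N) (Fin N) K)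
    (hA : ∀ n, A.tailMinor n ≠ 0) :
    A⁻¹.det = ∏ k : Fin N,
      (A.submatrix (Subtype.val : {j : Fin N // k ≤ j} → Fin N) Subtype.val)⁻¹
        ⟨k, le_rfl⟩ ⟨k, le_rfl⟩ := by
  simp_rw [inv_submatrix_Ici_apply_self]
  rw [Fin.prod_univ_eq_prod_range (fun k => A.tailMinor (k + 1) / A.tailMinor k),
    Finset.prod_range_div₀ _ hA, tailMinor_of_le A le_rfl, tailMinor_zero,
    det_nonsing_inv, Ring.inverse_eq_inv', one_div]

end TailMinor

theorem mulVec_le_mulVec_of_nonneg {n R : Type*} [Fintype n] [Semiring R] [PartialOrder R]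
    [IsOrderedRing R] {P : Matrix n n R} (hP : ∀ i j, 0 ≤ P i j) {v w : n → R}
    (hvw : v ≤ w) : P *ᵥ v ≤ P *ᵥ w :=
  fun i => Finset.sum_le_sum fun j _ => mul_le_mul_of_nonneg_left (hvw j) (hP i j)

theorem submatrix_one_sub {m n R : Type*} [DecidableEq m] [DecidableEq n] [Ring R]
    (Q : Matrix n n R) {e : m → n} (he : Injective e) :
    (1 - Q).submatrix e e = 1 - Q.submatrix e e := by
  ext i j
  simp [one_apply, he.eq_iff]

section Analytic

variable {m n : Type*}

section LinftyOpNorm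

-- Any Banach algebra norm would do: neither the spectrum nor the topology depends on it.
attribute [local instance] Matrix.linftyOpNormedRing Matrix.linftyOpNormedAlgebra

theorem tendsto_pow_nhds_zero_of_spectralRadius_map_ofReal_lt_one [Fintype n] [DecidableEq n]
    (P : Matrix n n ℝ) (hP : spectralRadius ℂ (P.map Complex.ofReal) < 1) :
    Tendsto (P ^ ·) atTop (𝓝 0) := by
  convert ((continuous_id.matrix_map Complex.continuous_re).tendsto 0).comp
    (spectrum.tendsto_pow_nhds_zero_of_spectralRadius_lt_one hP) using 1
  · ext1 k
    simp only [Function.comp_apply, id_eq]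
    rw [show P.map Complex.ofReal = P.map Complex.ofRealHom from rfl, ← Matrix.map_pow, map_map]
    ext i j
    simp
  · simp

end LinftyOpNorm

theorem eq_zero_of_le_mulVec [Fintype n] [DecidableEq n] {P : Matrix n n ℝ}
    (hP : ∀ i j, 0 ≤ P i j) (hlim : Tendsto (P ^ ·) atTop (𝓝 0)) {w : n → ℝ}
    (hw : 0 ≤ w) (hwP : w ≤ P *ᵥ w) : w = 0 := by
  have hiter : ∀ k, w ≤ P ^ k *ᵥ w := by
    intro k
    induction k with
    | zero => simp
    | succ k ih =>
      calc w ≤ P *ᵥ w := hwP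
        _ ≤ P *ᵥ (P ^ k *ᵥ w) := mulVec_le_mulVec_of_nonneg hP ih
        _ = P ^ (k + 1) *ᵥ w := by rw [mulVec_mulVec, pow_succ']
  have hto : Tendsto (fun k => P ^ k *ᵥ w) atTop (𝓝 0) := by
    simpa [comp_def] using
      ((continuous_id.matrix_mulVec continuous_const).tendsto (0 : Matrix n n ℝ)).comp hlim
  exact le_antisymm (ge_of_tendsto' hto hiter) hw

theorem extend_norm_nonneg {𝕜 : Type*} [SeminormedAddGroup 𝕜] (e : m → n) (v : m → 𝕜) :
    0 ≤ extend e (‖v ·‖) 0 := fun i => by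
  classical
  rw [extend_def]
  split_ifs <;> simp

theorem extend_norm_le_mulVec {𝕜 : Type*} [SeminormedRing 𝕜] [Fintype m] [Fintype n]
    {Q : Matrix n n 𝕜} {P : Matrix n n ℝ} (hQP : ∀ i j, ‖Q i j‖ ≤ P i j) {e : m → n}
    (he : Injective e) {v : m → 𝕜} (hv : Q.submatrix e e *ᵥ v = v) :
    extend e (‖v ·‖) 0 ≤ P *ᵥ extend e (‖v ·‖) 0 := by
  set w : n → ℝ := extend e (‖v ·‖) 0
  have hwe : ∀ a, w (e a) = ‖v a‖ := he.extend_apply _ _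
  have hPw : ∀ i j, 0 ≤ P i j * w j := fun i j =>
    mul_nonneg ((norm_nonneg _).trans (hQP i j)) (extend_norm_nonneg e v j)
  intro i
  by_cases hi : ∃ a, e a = i
  · obtain ⟨a, rfl⟩ := hi
    calc w (e a) = ‖∑ b, Q (e a) (e b) * v b‖ := by rw [hwe, ← congrFun hv a]; rfl
      _ ≤ ∑ b, P (e a) (e b) * w (e b) :=
          (norm_sum_le _ _).trans <| Finset.sum_le_sum fun b _ => by
            rw [hwe]
            exact (norm_mul_le _ _).trans (mul_le_mul_of_nonneg_right (hQP _ _) (norm_nonneg _))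
      _ = ∑ j ∈ Finset.univ.map ⟨e, he⟩, P (e a) j * w j :=
          (Finset.sum_map Finset.univ ⟨e, he⟩ fun j => P (e a) j * w j).symm
      _ ≤ (P *ᵥ w) (e a) := Finset.sum_le_sum_of_subset_of_nonneg (Finset.subset_univ _)
          fun j _ _ => hPw _ j
  · rw [show w i = 0 from extend_apply' _ _ _ hi]
    exact Finset.sum_nonneg fun j _ => hPw i j

theorem det_one_sub_submatrix_ne_zero {𝕜 : Type*} [NormedField 𝕜] [Fintype m] [DecidableEq m]
    [Fintype n] [DecidableEq n] (Q : Matrix n n 𝕜) {P : Matrix n n ℝ}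
    (hQP : ∀ i j, ‖Q i j‖ ≤ P i j) (hP : Tendsto (P ^ ·) atTop (𝓝 0)) {e : m → n}
    (he : Injective e) :
    (1 - Q.submatrix e e).det ≠ 0 := by
  intro hdet
  obtain ⟨v, hv0, hv⟩ := exists_mulVec_eq_zero_iff.mpr hdet
  have hfix : Q.submatrix e e *ᵥ v = v := by
    rw [sub_mulVec, one_mulVec, sub_eq_zero] at hv
    exact hv.symm
  have hw0 := eq_zero_of_le_mulVec (fun i j => (norm_nonneg _).trans (hQP i j)) hP
    (extend_norm_nonneg e v) (extend_norm_le_mulVec hQP he hfix)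
  exact hv0 <| funext fun a =>
    norm_eq_zero.mp ((he.extend_apply _ _ a).symm.trans (congrFun hw0 (e a)))

end Analytic

end Matrix

/-- Determinant of the Green's function as a product of Green's functions of nested
subgraphs: if `ρ(|Q|) < 1`, `G = (I − Q)⁻¹` and `G_k = (I − Q_k)⁻¹` where `Q_k` is `Q`
restricted to indices `≥ k`, then `det G = ∏_k G_k(k,k)`. -/
theorem det_green_product (N : ℕ) (Q : Matrix (Fin N) (Fin N) ℂ)
    (hQ : spectralRadius ℂ (Matrix.of fun i j => (‖Q i j‖ : ℂ)) < 1) :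
    Matrix.det (1 - Q)⁻¹ =
      ∏ k : Fin N,
        ((1 - Q.submatrix (fun j : {j : Fin N // k ≤ j} => (j : Fin N))
            (fun j : {j : Fin N // k ≤ j} => (j : Fin N)))⁻¹
          ⟨k, le_refl k⟩ ⟨k, le_refl k⟩) := by
  have hP := tendsto_pow_nhds_zero_of_spectralRadius_map_ofReal_lt_one (Q.map (‖·‖)) hQ
  have hminor : ∀ n, (1 - Q).tailMinor n ≠ 0 := fun n => by
    rw [tailMinor, submatrix_one_sub _ Subtype.val_injective]
    exact det_one_sub_submatrix_ne_zero Q (fun _ _ => le_rfl) hP Subtype.val_injective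
  simpa only [submatrix_one_sub _ Subtype.val_injective] using
    det_nonsing_inv_eq_prod_inv_submatrix_Ici_apply_self (1 - Q) hminor
end

section
/- Let C be an N×N current (matrix of naturals with balanced row and column sums at each index), let x be a fixed vertex with U = V \ {x}. For a current C⁺ supported on loops through x, let W(C⁺) denote the number of rooted loops ω based at x with edge local times c_{uv}(ω) = C⁺_{uv} for all u,v. Then ∏_{u∈V} multinomial(n_u(C); (C_{uv})_{v∈V}) = Σ_{(C⁺, C⁰)} W(C⁺) · ∏_{u∈U} multinomial(n_u(C⁰); (C⁰_{uv})_{v∈U}), where the sum is over pairs with C⁺ a current on V, C⁰ a current on U (i.e., C⁰_{uv} = 0 if u = x or v = x), and C⁺ + C⁰ = C. -/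
/-!
Read `∏ u, multinomial (C u)` as the number of stack configurations: at each vertex `u` a list
of successors in which `v` occurs `C u v` times. Starting at `x`, keep leaving the current vertex
towards the top of its stack, popping it, until the current stack is empty. Flow conservation
forces this walk to stop at `x`, so it is a rooted loop with edge local times `C⁺`, and the unused
stacks form a configuration for a current `C⁰` with empty row and column at `x`. Conversely,
pushing the successive exits of such a loop back on top of the stacks inverts the walk.
-/

open Finset
open scoped Nat

section ListCount

variable {α : Type*} [DecidableEq α]

theorem List.length_eq_sum_count [Fintype α] (l : List α) : l.length = ∑ a, l.count a := by
  simpa using (Multiset.sum_count_eq_card (s := univ) (m := (l : Multiset α)) (by simp)).symm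

theorem List.eq_nil_of_forall_count_eq_zero {l : List α} (h : ∀ a, l.count a = 0) : l = [] :=
  List.eq_nil_iff_forall_not_mem.mpr fun a => List.count_eq_zero.mp (h a)

lemma finite_list_count_eq [Fintype α] (m : α → ℕ) :
    Finite {l : List α // ∀ a, l.count a = m a} :=
  Set.Finite.to_subtype <| (List.finite_length_eq α (∑ a, m a)).subset
    fun l (hl : ∀ a, l.count a = m a) =>
      (List.length_eq_sum_count l).trans (sum_congr rfl fun a _ => hl a)

lemma card_cons_count_eq_of_eq_zero {m : α → ℕ} {b : α} (hb : m b = 0) :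
    Nat.card {t : List α // ∀ a, (b :: t).count a = m a} = 0 := by
  have : IsEmpty {t : List α // ∀ a, (b :: t).count a = m a} :=
    ⟨fun t => by simpa [hb] using t.2 b⟩
  exact Nat.card_of_isEmpty

lemma card_cons_count_eq_of_ne_zero {m : α → ℕ} {b : α} (hb : m b ≠ 0) :
    Nat.card {t : List α // ∀ a, (b :: t).count a = m a} =
      Nat.card {t : List α // ∀ a, t.count a = Function.update m b (m b - 1) a} := by
  refine Nat.card_congr (Equiv.subtypeEquivRight fun t => forall_congr' fun a => ?_)
  rcases eq_or_ne a b with rfl | hab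
  · simp only [List.count_cons_self, Function.update_self]
    omega
  · simp [hab, Ne.symm hab]

lemma prod_factorial_eq_mul_update_pred [Fintype α] {m : α → ℕ} {b : α} (hb : m b ≠ 0) :
    ∏ a, (m a)! = m b * ∏ a, (Function.update m b (m b - 1) a)! := by
  rw [← mul_prod_erase univ _ (mem_univ b), ← mul_prod_erase univ _ (mem_univ b),
    Function.update_self, ← mul_assoc, Nat.mul_factorial_pred hb]
  congr 1
  exact prod_congr rfl fun a ha => by rw [Function.update_of_ne (ne_of_mem_erase ha)]

lemma sum_update_pred [Fintype α] {m : α → ℕ} {b : α} (hb : m b ≠ 0) :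
    ∑ a, Function.update m b (m b - 1) a = ∑ a, m a - 1 := by
  rw [← add_sum_erase univ _ (mem_univ b), ← add_sum_erase univ m (mem_univ b),
    Function.update_self, sum_congr rfl fun a ha => Function.update_of_ne (ne_of_mem_erase ha) _ _]
  omega

/-- Splitting off the first letter gives `N(m) = ∑_b N(m - e_b)`, the recursion satisfied by
`(∑ m)! / ∏ (m a)!`. -/
theorem card_list_count_eq_mul_prod_factorial [Fintype α] (m : α → ℕ) :
    Nat.card {l : List α // ∀ a, l.count a = m a} * ∏ a, (m a)! = (∑ a, m a)! := by
  induction hn : ∑ a, m a generalizing m with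
  | zero =>
    have hm : ∀ a, m a = 0 := by simpa using hn
    have : Unique {l : List α // ∀ a, l.count a = m a} :=
      { default := ⟨[], by simp [hm]⟩
        uniq := fun l =>
          Subtype.ext <| List.eq_nil_of_forall_count_eq_zero fun a => (l.2 a).trans (hm a) }
    rw [Nat.card_unique]
    simp [hm]
  | succ n ih =>
    have : ∀ b, Finite {t : List α // ∀ a, (b :: t).count a = m a} := fun b =>
      have := finite_list_count_eq m
      Finite.of_injective (fun t => (⟨b :: t.1, t.2⟩ : {l : List α // ∀ a, l.count a = m a}))
        fun s t hst => Subtype.ext (List.cons_injective (congrArg Subtype.val hst))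
    have hsplit : Nat.card {l : List α // ∀ a, l.count a = m a} =
        ∑ b, Nat.card {t : List α // ∀ a, (b :: t).count a = m a} := by
      rw [← Nat.card_sigma]
      refine (Nat.card_eq_of_bijective (fun s => ⟨s.1 :: s.2.1, s.2.2⟩) ⟨?_, ?_⟩).symm
      · rintro ⟨b, t, ht⟩ ⟨b', t', ht'⟩ h
        obtain ⟨rfl, rfl⟩ := List.cons_eq_cons.mp (congrArg Subtype.val h)
        rfl
      · rintro ⟨_ | ⟨b, t⟩, hl⟩
        · simp [← (by simpa using hl : ∀ a, 0 = m a)] at hn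
        · exact ⟨⟨b, t, hl⟩, rfl⟩
    have hfiber : ∀ b, Nat.card {t : List α // ∀ a, (b :: t).count a = m a} * ∏ a, (m a)! =
        m b * n ! := fun b => by
      rcases eq_or_ne (m b) 0 with hb | hb
      · simp [card_cons_count_eq_of_eq_zero hb, hb]
      · rw [card_cons_count_eq_of_ne_zero hb, prod_factorial_eq_mul_update_pred hb, mul_left_comm,
          ih _ (by rw [sum_update_pred hb, hn]; rfl)]
    rw [hsplit, sum_mul, sum_congr rfl fun b _ => hfiber b, ← sum_mul, hn, Nat.factorial_succ]

theorem card_list_count_eq_multinomial [Fintype α] (m : α → ℕ) :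
    Nat.card {l : List α // ∀ a, l.count a = m a} = Nat.multinomial univ m := by
  have h := card_list_count_eq_mul_prod_factorial m
  rw [← Nat.multinomial_spec, mul_comm] at h
  exact Nat.eq_of_mul_eq_mul_left (Nat.prod_factorial_pos _ _) h

lemma List.sum_count_prod_mk_left {β : Type*} [DecidableEq β] [Fintype β]
    (L : List (α × β)) (a : α) : ∑ b, L.count (a, b) = (L.map Prod.fst).count a := by
  induction L with
  | nil => simp
  | cons e L ih =>
    rcases e with ⟨c, d⟩
    by_cases h : c = a
    · subst h
      simp [List.count_cons, sum_add_distrib, ih]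
    · simp [ih, h]

omit [DecidableEq α] in
lemma List.map_fst_zip_tail (l : List α) : (l.zip l.tail).map Prod.fst = l.dropLast := by
  induction l with
  | nil => rfl
  | cons a t ih => cases t with
    | nil => rfl
    | cons b s => simp_all

end ListCount

namespace CurrentDecomposition

variable {V : Type*} [DecidableEq V]

def edgeCount (ω : List V) (u v : V) : ℕ := (ω.zip ω.tail).count (u, v)

lemma sum_edgeCount_add_getLast [Fintype V] (ω : List V) (a : V) :
    ∑ b, edgeCount ω a b + (if ω.getLast? = some a then 1 else 0) = ω.count a := by
  simp only [edgeCount, List.sum_count_prod_mk_left, List.map_fst_zip_tail]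
  rcases List.eq_nil_or_concat ω with rfl | ⟨L, b, rfl⟩
  · simp
  · simp [List.count_append, List.count_singleton]

lemma sum_edgeCount_add_head [Fintype V] (ω : List V) (a : V) :
    ∑ b, edgeCount ω b a + (if ω.head? = some a then 1 else 0) = ω.count a := by
  have hswap : ∀ b, edgeCount ω b a = ((ω.zip ω.tail).map Prod.swap).count (a, b) := fun b =>
    (List.count_map_of_injective _ _ Prod.swap_injective (b, a)).symm
  simp only [hswap, List.sum_count_prod_mk_left, List.map_map]
  rw [show Prod.fst ∘ Prod.swap = @Prod.snd V V from rfl, List.map_snd_zip (by simp)]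
  cases ω <;> simp [List.count_cons]

lemma sum_edgeCount_balance [Fintype V] {ω : List V} {x w : V} (hx : ω.head? = some x)
    (hw : ω.getLast? = some w) (a : V) :
    ∑ b, edgeCount ω a b + (if w = a then 1 else 0) =
      ∑ b, edgeCount ω b a + (if x = a then 1 else 0) := by
  have h1 := sum_edgeCount_add_getLast ω a
  have h2 := sum_edgeCount_add_head ω a
  simp only [hx, hw, Option.some.injEq] at h1 h2
  omega

def exits (ω : List V) (a : V) : List V :=
  (ω.zip ω.tail).filterMap fun e => if e.1 = a then some e.2 else none

lemma count_exits (ω : List V) (a b : V) : (exits ω a).count b = edgeCount ω a b := by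
  unfold exits edgeCount
  induction ω.zip ω.tail with
  | nil => rfl
  | cons e L ih =>
    rcases e with ⟨c, d⟩
    by_cases h : c = a
    · subst h; simp [List.count_cons, ih]
    · simp [ih, h]

@[simp] lemma exits_singleton (u a : V) : exits [u] a = [] := rfl

lemma exits_cons_cons (u v : V) (t : List V) (a : V) :
    exits (u :: v :: t) a = (if u = a then [v] else []) ++ exits (v :: t) a := by
  by_cases h : u = a <;> simp [exits, h]

/-- Walking from `u` and always leaving the current vertex along the top of its stack until an
empty stack is reached: `ω` is the walk, `g` the unused parts of the stacks. -/
theorem exists_exits_append [Fintype V] (f : V → List V) (u : V) :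
    ∃ (ω : List V) (g : V → List V) (w : V),
      ω.head? = some u ∧ ω.getLast? = some w ∧ g w = [] ∧ ∀ a, f a = exits ω a ++ g a := by
  induction hn : ∑ a, (f a).length using Nat.strong_induction_on generalizing f u with
  | _ n ih =>
  rcases hfu : f u with _ | ⟨v, t⟩
  · exact ⟨[u], f, u, rfl, rfl, hfu, fun a => rfl⟩
  have hlt : ∑ a, (Function.update f u t a).length < n := by
    rw [← hn]
    refine sum_lt_sum (fun a _ => ?_) ⟨u, mem_univ u, by simp [hfu]⟩
    rcases eq_or_ne a u with rfl | ha
    · simp [hfu]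
    · simp [ha]
  obtain ⟨ω, g, w, hω, hw, hgw, hf⟩ := ih _ hlt _ v rfl
  obtain ⟨rest, rfl⟩ : ∃ rest, ω = v :: rest := ⟨ω.tail, (List.cons_head?_tail hω).symm⟩
  refine ⟨u :: v :: rest, g, w, rfl, by simpa using hw, hgw, fun a => ?_⟩
  rw [exits_cons_cons, List.append_assoc, ← hf a]
  rcases eq_or_ne a u with rfl | ha
  · simp [hfu]
  · simp [ha, Ne.symm ha]

theorem eq_of_exits_append_eq {ω ω' : List V} {g g' : V → List V} {u w w' : V}
    (hω : ω.head? = some u) (hω' : ω'.head? = some u) (hw : ω.getLast? = some w)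
    (hw' : ω'.getLast? = some w') (hg : g w = []) (hg' : g' w' = [])
    (h : ∀ a, exits ω a ++ g a = exits ω' a ++ g' a) : ω = ω' ∧ g = g' := by
  induction ω generalizing u ω' with
  | nil => simp at hω
  | cons u₀ rest ih =>
  obtain rfl : u₀ = u := by simpa using hω
  obtain ⟨rest', rfl⟩ : ∃ rest', ω' = u₀ :: rest' := ⟨ω'.tail, (List.cons_head?_tail hω').symm⟩
  rcases rest with _ | ⟨v, t⟩ <;> rcases rest' with _ | ⟨v', t'⟩
  · exact ⟨rfl, funext fun a => by simpa using h a⟩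
  · obtain rfl : u₀ = w := by simpa using hw
    simpa [exits_cons_cons, hg] using h u₀
  · obtain rfl : u₀ = w' := by simpa using hw'
    simpa [exits_cons_cons, hg'] using h u₀
  · obtain ⟨rfl, htail⟩ : v = v' ∧ exits (v :: t) u₀ ++ g u₀ = exits (v' :: t') u₀ ++ g' u₀ := by
      simpa [exits_cons_cons] using h u₀
    have hrest : ∀ a, exits (v :: t) a ++ g a = exits (v :: t') a ++ g' a := fun a => by
      rcases eq_or_ne a u₀ with rfl | ha
      · exact htail
      · simpa [exits_cons_cons, Ne.symm ha] using h a
    obtain ⟨heq, rfl⟩ := ih rfl rfl (by simpa using hw) (by simpa using hw') hrest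
    exact ⟨by rw [heq], rfl⟩

variable [Fintype V]

def IsCurrent (C : Matrix V V ℕ) : Prop := ∀ u, ∑ v, C u v = ∑ v, C v u

lemma isCurrent_edgeCount {ω : List V} {x : V} (hx : ω.head? = some x)
    (hx' : ω.getLast? = some x) : IsCurrent (edgeCount ω) :=
  fun a => by simpa using sum_edgeCount_balance hx hx' a

/-- `P` plays the edge counts of a walk from `x` to `w`: conservation at `w`, whose row in `G` is
empty, forces the walk to have returned to `x`. -/
lemma eq_and_isCurrent_of_add_eq {C P G : Matrix V V ℕ} {x w : V} (hC : IsCurrent C)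
    (hPG : P + G = C)
    (hP : ∀ a, ∑ b, P a b + (if w = a then 1 else 0) = ∑ b, P b a + (if x = a then 1 else 0))
    (hG : ∀ b, G w b = 0) : w = x ∧ (∀ u, G u x = 0) ∧ IsCurrent G := by
  have hrow : ∀ a, ∑ b, C a b = ∑ b, P a b + ∑ b, G a b := fun a => by
    simp [← hPG, sum_add_distrib]
  have hcol : ∀ a, ∑ b, C b a = ∑ b, P b a + ∑ b, G b a := fun a => by
    simp [← hPG, sum_add_distrib]
  obtain ⟨rfl, hGw⟩ : w = x ∧ ∑ b, G b w = 0 := by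
    have hGw : ∑ b, G w b = 0 := by simp [hG]
    have := hC w; have := hrow w; have := hcol w; have hPw := hP w
    rw [if_pos rfl] at hPw
    split_ifs at hPw with hxw
    · exact ⟨hxw.symm, by omega⟩
    · omega
  refine ⟨rfl, fun u => sum_eq_zero_iff.mp hGw u (mem_univ u), fun a => ?_⟩
  have := hC a; have := hP a; have := hrow a; have := hcol a
  omega

variable (C : Matrix V V ℕ) (x : V)

abbrev Stacks : Type _ := {g : V → List V // ∀ a b, (g a).count b = C a b}

abbrev RootedLoops (P : Matrix V V ℕ) : Type _ :=
  {ω : List V // ω.head? = some x ∧ ω.getLast? = some x ∧ ∀ u v, edgeCount ω u v = P u v}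

abbrev CurrentSplits : Type _ :=
  {p : Matrix V V ℕ × Matrix V V ℕ // IsCurrent p.1 ∧ IsCurrent p.2 ∧
    (∀ v, p.2 x v = 0) ∧ (∀ u, p.2 u x = 0) ∧ p.1 + p.2 = C}

def stacksEquivPi : Stacks C ≃ ∀ a, {l : List V // ∀ b, l.count b = C a b} :=
  Equiv.subtypePiEquivPi (p := fun a (l : List V) => ∀ b, l.count b = C a b)

instance : Finite (Stacks C) :=
  have := fun a => finite_list_count_eq (C a)
  Finite.of_equiv _ (stacksEquivPi C).symm

theorem card_stacks : Nat.card (Stacks C) = ∏ a, Nat.multinomial univ (C a) := by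
  simp [Nat.card_congr (stacksEquivPi C), Nat.card_pi, card_list_count_eq_multinomial]

instance : Finite (CurrentSplits C x) := by
  have := (Set.finite_Iic (α := V → V → ℕ) C).to_subtype
  refine Finite.of_injective (β := Set.Iic (α := V → V → ℕ) C)
    (fun p => ⟨p.1.1, fun u v =>
      le_of_le_of_eq (Nat.le_add_right _ _) (congrFun₂ p.2.2.2.2.2 u v)⟩)
    fun p q hpq => ?_
  have h1 : p.1.1 = q.1.1 := congrArg Subtype.val hpq
  have h2 : p.1.2 = q.1.2 := add_left_cancel ((h1 ▸ p.2.2.2.2.2).trans q.2.2.2.2.2.symm)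
  exact Subtype.ext (Prod.ext h1 h2)

variable {C x}

def splice (s : Σ p : CurrentSplits C x, RootedLoops x p.1.1 × Stacks p.1.2) : Stacks C :=
  ⟨fun a => exits s.2.1.1 a ++ s.2.2.1 a, fun a b => by
    obtain ⟨⟨_, -, -, -, -, hPG⟩, ⟨ω, -, -, hω⟩, ⟨g, hg⟩⟩ := s
    rw [List.count_append, count_exits, hω, hg]
    exact congrFun₂ hPG a b⟩

lemma splice_injective : Function.Injective (splice (C := C) (x := x)) := by
  rintro ⟨⟨⟨P, G⟩, _, _, hGx, _, _⟩, ⟨ω, hx, hx', hω⟩, ⟨g, hg⟩⟩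
    ⟨⟨⟨P', G'⟩, _, _, hGx', _, _⟩, ⟨ω', hy, hy', hω'⟩, ⟨g', hg'⟩⟩ h
  have hgx : g x = [] := List.eq_nil_of_forall_count_eq_zero fun b => (hg x b).trans (hGx b)
  have hgx' : g' x = [] := List.eq_nil_of_forall_count_eq_zero fun b => (hg' x b).trans (hGx' b)
  obtain ⟨rfl, rfl⟩ :=
    eq_of_exits_append_eq hx hy hx' hy' hgx hgx' fun a => congrFun (congrArg Subtype.val h) a
  obtain rfl : P = P' := funext₂ fun u v => (hω u v).symm.trans (hω' u v)
  obtain rfl : G = G' := funext₂ fun a b => (hg a b).symm.trans (hg' a b)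
  rfl

lemma splice_surjective (hC : IsCurrent C) : Function.Surjective (splice (C := C) (x := x)) := by
  rintro ⟨f, hf⟩
  obtain ⟨ω, g, w, hx, hw, hgw, hfg⟩ := exists_exits_append f x
  have hPG : edgeCount ω + (fun a b => (g a).count b) = C := funext₂ fun a b => by
    simp [← hf, hfg a, count_exits]
  obtain ⟨rfl, hGx, hG⟩ := eq_and_isCurrent_of_add_eq hC hPG (sum_edgeCount_balance hx hw)
    fun b => by simp [hgw]
  refine ⟨⟨⟨⟨edgeCount ω, fun a b => (g a).count b⟩, isCurrent_edgeCount hx hw, hG,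
    fun b => by simp [hgw], hGx, hPG⟩, ⟨ω, hx, hw, fun _ _ => rfl⟩, ⟨g, fun _ _ => rfl⟩⟩, ?_⟩
  exact Subtype.ext (funext fun a => (hfg a).symm)

theorem card_stacks_eq_finsum (hC : IsCurrent C) :
    Nat.card (Stacks C) = ∑ᶠ p : CurrentSplits C x,
      Nat.card (RootedLoops x p.1.1) * Nat.card (Stacks p.1.2) := by
  let e := Equiv.ofBijective _ ⟨splice_injective, splice_surjective (x := x) hC⟩
  have : Finite (Σ p : CurrentSplits C x, RootedLoops x p.1.1 × Stacks p.1.2) :=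
    Finite.of_equiv _ e.symm
  have : ∀ p : CurrentSplits C x, Finite (RootedLoops x p.1.1 × Stacks p.1.2) := fun p =>
    Finite.of_injective
      (fun y => (⟨p, y⟩ : Σ q : CurrentSplits C x, RootedLoops x q.1.1 × Stacks q.1.2))
      fun _ _ h => by simpa using h
  have := Fintype.ofFinite (CurrentSplits C x)
  rw [← Nat.card_congr e, Nat.card_sigma, finsum_eq_sum_of_fintype]
  simp_rw [Nat.card_prod]

omit [Fintype V] in
lemma prod_multinomial_erase [Fintype V] {G : Matrix V V ℕ} (hrow : ∀ v, G x v = 0)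
    (hcol : ∀ u, G u x = 0) :
    ∏ u ∈ univ.erase x, Nat.multinomial (univ.erase x) (G u) =
      ∏ u, Nat.multinomial univ (G u) := by
  rw [prod_erase univ (by simp [Nat.multinomial, hrow])]
  exact prod_congr rfl fun u _ =>
    Nat.multinomial_congr_of_sdiff (erase_subset x univ) (by simp [hcol]) fun _ _ => rfl

end CurrentDecomposition

open CurrentDecomposition in
/-- The combinatorial identity behind the current distribution: for a current `C` on
`V` and a fixed vertex `x` with `U = V \ {x}`,
`∏_{u∈V} multinomial(n_u(C); (C_{uv})_v) = Σ_{(C⁺,C⁰)} W(C⁺) ∏_{u∈U}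
multinomial(n_u(C⁰); (C⁰_{uv})_{v∈U})`, where the sum is over pairs of currents
`C⁺` on `V` and `C⁰` on `U` with `C⁺ + C⁰ = C`, and `W(C⁺)` is the number of rooted
loops at `x` with edge local times `C⁺`. -/
theorem multinomial_current_decomposition {V : Type*} [Fintype V] [DecidableEq V]
    (C : Matrix V V ℕ) (hC : ∀ u, ∑ v, C u v = ∑ v, C v u) (x : V) :
    ∏ u, Nat.multinomial Finset.univ (C u) =
      ∑ᶠ p : {p : Matrix V V ℕ × Matrix V V ℕ //
          (∀ u, ∑ v, p.1 u v = ∑ v, p.1 v u) ∧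
          (∀ u, ∑ v, p.2 u v = ∑ v, p.2 v u) ∧
          (∀ v, p.2 x v = 0) ∧ (∀ u, p.2 u x = 0) ∧
          p.1 + p.2 = C},
        Nat.card {ω : List V // ω.head? = some x ∧ ω.getLast? = some x ∧
            ∀ u v, (ω.zip ω.tail).count (u, v) = p.1.1 u v} *
          ∏ u ∈ Finset.univ.erase x,
            Nat.multinomial (Finset.univ.erase x) (p.1.2 u) := by
  rw [← card_stacks, card_stacks_eq_finsum (x := x) hC]
  refine finsum_congr fun p => ?_
  obtain ⟨-, -, hrow, hcol, -⟩ := p.2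
  rw [card_stacks, prod_multinomial_erase hrow hcol]
  rfl
end

section
/- Given nonnegative reals t_1, ..., t_N and a complex N×N matrix Q with entries q_{jk}, the following identity holds: (2π)^N · Σ_{C current} ∏_{j,k} (t_j t_k)^{C_{jk}/2} q_{jk}^{C_{jk}} / C_{jk}! = ∫_{[0,2π)^N} ∏_{j,k} exp( √(t_j t_k) · q_{jk} · e^{i(θ_k − θ_j)} ) dθ, where the sum is over all N×N natural-number matrices C with balanced row and column sums (Σ_j C_{jk} = Σ_j C_{kj} for all k), and both sides converge absolutely provided Σ_{j,k} √(t_j t_k) |q_{jk}| < ∞ (automatic for finite N). -/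
/-!
Expand every factor `exp (a_jk e^{i(θ_k - θ_j)})` of the integrand in its power series. The product
becomes an absolutely convergent sum over all `C : ℕ^{N×N}` of `∏ a_jk ^ C_jk / C_jk!` times the
phase `∏_u e^{i (in_u - out_u) θ_u}`, where `in_u - out_u` is the net flow of `C` through `u`.
The modulus of each term does not depend on `θ`, so the sum can be integrated term by term over the
torus, and the integral of the phase is `(2π)^N` when `C` is a current and `0` otherwise.
-/

open MeasureTheory

/-- A current: a matrix of naturals with balanced row and column sums. -/
def IsCurrent {N : ℕ} (C : Matrix (Fin N) (Fin N) ℕ) : Prop :=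
  ∀ u, ∑ v, C u v = ∑ v, C v u

open Filter Complex
open scoped Nat Real

section

variable {ι : Type*} [Fintype ι]

theorem summable_prod_pi_of_nonneg {β : Type*} {g : ι → β → ℝ} (hg₀ : ∀ i b, 0 ≤ g i b)
    (hg : ∀ i, Summable (g i)) : Summable fun n : ι → β => ∏ i, g i (n i) := by
  classical
  refine summable_of_sum_le (c := ∏ i, ∑' b, g i b)
    (fun n => Finset.prod_nonneg fun i _ => hg₀ i (n i)) fun F => ?_
  calc ∑ n ∈ F, ∏ i, g i (n i)
      ≤ ∑ n ∈ Fintype.piFinset fun i => F.image (· i), ∏ i, g i (n i) :=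
        Finset.sum_le_sum_of_subset_of_nonneg
          (fun n hn => Fintype.mem_piFinset.2 fun i => Finset.mem_image_of_mem _ hn)
          fun n _ _ => Finset.prod_nonneg fun i _ => hg₀ i (n i)
    _ = ∏ i, ∑ b ∈ F.image (· i), g i b := (Finset.prod_univ_sum _ _).symm
    _ ≤ ∏ i, ∑' b, g i b :=
        Finset.prod_le_prod (fun i _ => Finset.sum_nonneg fun b _ => hg₀ i b)
          fun i _ => (hg i).sum_le_tsum _ fun b _ => hg₀ i b

theorem Fintype.tendsto_piFinset_atTop {β : Type*} [DecidableEq ι] :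
    Tendsto (Fintype.piFinset : (ι → Finset β) → Finset (ι → β)) atTop atTop := by
  classical
  refine tendsto_atTop.2 fun F =>
    (eventually_ge_atTop fun i => F.image (· i)).mono fun t ht n hn => ?_
  exact Fintype.mem_piFinset.2 fun i => ht i (Finset.mem_image_of_mem _ hn)

theorem summable_norm_and_hasSum_prod_pi {β R : Type*} [NormedCommRing R] [NormOneClass R]
    {f : ι → β → R} {s : ι → R} (hf : ∀ i, Summable fun b => ‖f i b‖)
    (hs : ∀ i, HasSum (f i) (s i)) :
    Summable (fun n : ι → β => ‖∏ i, f i (n i)‖) ∧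
      HasSum (fun n : ι → β => ∏ i, f i (n i)) (∏ i, s i) := by
  classical
  have hnorm : Summable fun n : ι → β => ‖∏ i, f i (n i)‖ :=
    (summable_prod_pi_of_nonneg (fun i b => norm_nonneg (f i b)) hf).of_nonneg_of_le
      (fun _ => norm_nonneg _) fun n => Finset.norm_prod_le _ _
  refine ⟨hnorm, hasSum_of_subseq_of_summable hnorm Fintype.tendsto_piFinset_atTop ?_⟩
  -- the partial sum over the box `piFinset t` is the product of the partial sums over the `t i`
  simp only [← Finset.prod_univ_sum]
  refine tendsto_finsetProd _ fun i _ => (hs i).comp ?_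
  exact tendsto_atTop.2 fun b => (eventually_ge_atTop fun _ => b).mono fun t ht => ht i

theorem Complex.hasSum_pow_div_factorial (z : ℂ) : HasSum (fun n => z ^ n / n !) (cexp z) := by
  rw [exp_eq_exp_ℂ]
  exact NormedSpace.expSeries_div_hasSum_exp z

theorem summable_norm_and_hasSum_prod_prod_pow_div_factorial {κ : Type*} [Fintype κ]
    (a : ι → κ → ℂ) :
    Summable (fun C : ι → κ → ℕ => ‖∏ i, ∏ k, a i k ^ C i k / ((C i k)! : ℂ)‖) ∧
      HasSum (fun C : ι → κ → ℕ => ∏ i, ∏ k, a i k ^ C i k / ((C i k)! : ℂ))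
        (∏ i, ∏ k, cexp (a i k)) := by
  have row (i : ι) :
      Summable (fun r : κ → ℕ => ‖∏ k, a i k ^ r k / ((r k)! : ℂ)‖) ∧
        HasSum (fun r : κ → ℕ => ∏ k, a i k ^ r k / ((r k)! : ℂ)) (∏ k, cexp (a i k)) :=
    summable_norm_and_hasSum_prod_pi (f := fun k (n : ℕ) => a i k ^ n / (n ! : ℂ))
      (fun k => NormedSpace.norm_expSeries_div_summable (a i k))
      (fun k => hasSum_pow_div_factorial (a i k))
  exact summable_norm_and_hasSum_prod_pi (f := fun i (r : κ → ℕ) => ∏ k, a i k ^ r k / ((r k)! : ℂ))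
    (fun i => (row i).1) (fun i => (row i).2)

theorem Finset.sum_sum_mul_sub {R : Type*} [CommRing R] (c : ι → ι → R) (x : ι → R) :
    ∑ j, ∑ k, c j k * (x k - x j) = ∑ u, (∑ j, c j u - ∑ j, c u j) * x u := by
  simp only [mul_sub, Finset.sum_sub_distrib, sub_mul, Finset.sum_mul]
  rw [Finset.sum_comm (f := fun j k => c j k * x k)]

def netFlow (C : ι → ι → ℕ) (u : ι) : ℤ :=
  ∑ j, (C j u : ℤ) - ∑ j, (C u j : ℤ)

theorem prod_prod_exp_I_mul_sub_pow (C : ι → ι → ℕ) (θ : ι → ℝ) :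
    ∏ j, ∏ k, cexp (I * (θ k - θ j)) ^ C j k = ∏ u, cexp (I * (netFlow C u * θ u)) := by
  simp_rw [← exp_nat_mul, ← exp_sum]
  congr 1
  have := Finset.sum_sum_mul_sub (fun j k => (C j k : ℂ)) (fun u => (θ u : ℂ))
  push_cast [netFlow]
  simp only [mul_left_comm _ I, ← Finset.mul_sum, this]

theorem prod_prod_mul_exp_pow_div_factorial (a : ι → ι → ℂ) (C : ι → ι → ℕ) (θ : ι → ℝ) :
    ∏ j, ∏ k, (a j k * cexp (I * (θ k - θ j))) ^ C j k / (C j k)! =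
      (∏ j, ∏ k, a j k ^ C j k / (C j k)!) * ∏ u, cexp (I * (netFlow C u * θ u)) := by
  simp_rw [← prod_prod_exp_I_mul_sub_pow, ← Finset.prod_mul_distrib, mul_pow, mul_div_right_comm]

theorem norm_prod_prod_mul_exp_pow_div_factorial (a : ι → ι → ℂ) (C : ι → ι → ℕ)
    (θ : ι → ℝ) :
    ‖∏ j, ∏ k, (a j k * cexp (I * (θ k - θ j))) ^ C j k / (C j k)!‖ =
      ‖∏ j, ∏ k, a j k ^ C j k / (C j k)!‖ := by
  have (m : ℤ) (x : ℝ) : ‖cexp (I * (m * x))‖ = 1 := by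
    exact_mod_cast norm_exp_I_mul_ofReal (m * x)
  rw [prod_prod_mul_exp_pow_div_factorial, norm_mul, norm_prod]
  simp [this]

theorem integral_Ico_exp_I_mul_int_mul (m : ℤ) :
    ∫ x in Set.Ico (0 : ℝ) (2 * π), cexp (I * (m * x)) = if m = 0 then (2 * π : ℂ) else 0 := by
  split_ifs with hm
  · simp [hm, Real.pi_pos.le]
  · have hc : I * m ≠ 0 := by simp [hm]
    have hperiod : I * m * ((2 * π : ℝ) : ℂ) = m * (2 * π * I) := by push_cast; ring
    rw [integral_Ico_eq_integral_Ioo, ← integral_Ioc_eq_integral_Ioo,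
      ← intervalIntegral.integral_of_le Real.two_pi_pos.le]
    simp_rw [← mul_assoc]
    rw [integral_exp_mul_complex hc, hperiod, exp_int_mul_two_pi_mul_I, ofReal_zero, mul_zero,
      exp_zero, sub_self, zero_div]

theorem integral_pi_Ico_prod_exp_I_mul_int_mul (m : ι → ℤ) :
    ∫ θ in Set.univ.pi fun _ : ι => Set.Ico (0 : ℝ) (2 * π), ∏ u, cexp (I * (m u * θ u)) =
      if m = 0 then (2 * π : ℂ) ^ Fintype.card ι else 0 := by
  rw [volume_pi, Measure.restrict_pi_pi,
    integral_fintype_prod_eq_prod fun u (x : ℝ) => cexp (I * (m u * x))]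
  simp only [integral_Ico_exp_I_mul_int_mul]
  split_ifs with hm
  · simp [hm]
  · obtain ⟨u, hu⟩ := Function.ne_iff.1 hm
    exact Finset.prod_eq_zero (Finset.mem_univ u) (if_neg hu)

theorem integral_pi_Ico_prod_prod_mul_exp_pow_div_factorial (a : ι → ι → ℂ) (C : ι → ι → ℕ) :
    ∫ θ in Set.univ.pi fun _ : ι => Set.Ico (0 : ℝ) (2 * π),
        ∏ j, ∏ k, (a j k * cexp (I * (θ k - θ j))) ^ C j k / (C j k)! =
      if netFlow C = 0 then (2 * π : ℂ) ^ Fintype.card ι * ∏ j, ∏ k, a j k ^ C j k / (C j k)!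
      else 0 := by
  simp_rw [prod_prod_mul_exp_pow_div_factorial, integral_const_mul,
    integral_pi_Ico_prod_exp_I_mul_int_mul, mul_ite, mul_zero, mul_comm]

theorem hasSum_integral_pi_Ico_prod_prod_mul_exp_pow_div_factorial (a : ι → ι → ℂ) :
    HasSum (fun C : ι → ι → ℕ => ∫ θ in Set.univ.pi fun _ : ι => Set.Ico (0 : ℝ) (2 * π),
        ∏ j, ∏ k, (a j k * cexp (I * (θ k - θ j))) ^ C j k / (C j k)!)
      (∫ θ in Set.univ.pi fun _ : ι => Set.Ico (0 : ℝ) (2 * π),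
        ∏ j, ∏ k, cexp (a j k * cexp (I * (θ k - θ j)))) := by
  have : IsFiniteMeasure (volume.restrict (Set.univ.pi fun _ : ι => Set.Ico (0 : ℝ) (2 * π))) := by
    rw [volume_pi, Measure.restrict_pi_pi]
    infer_instance
  have hnorm := (summable_norm_and_hasSum_prod_prod_pow_div_factorial a).1
  have hterm_norm := norm_prod_prod_mul_exp_pow_div_factorial a
  have hexpand (θ : ι → ℝ) := (summable_norm_and_hasSum_prod_prod_pow_div_factorial
    fun j k => a j k * cexp (I * (θ k - θ j))).2
  simp_rw [← fun θ => (hexpand θ).tsum_eq]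
  refine hasSum_integral_of_summable_integral_norm (fun C => ?_) ?_
  · exact .of_bound (by fun_prop : Continuous _).aestronglyMeasurable _
      (ae_of_all _ fun θ => (hterm_norm C θ).le)
  · simp_rw [hterm_norm, integral_const, smul_eq_mul]
    exact hnorm.mul_left _

end

theorem isCurrent_iff_netFlow_eq_zero {N : ℕ} (C : Fin N → Fin N → ℕ) :
    IsCurrent C ↔ netFlow C = 0 := by
  simp only [funext_iff, netFlow, Pi.zero_apply, sub_eq_zero]
  exact forall_congr' fun u => by exact_mod_cast eq_comm

theorem current_sum_eq_torus_integral_general (N : ℕ) (Q : Matrix (Fin N) (Fin N) ℂ)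
    (t : Fin N → ℝ) :
    Summable (fun C : {C : Matrix (Fin N) (Fin N) ℕ // IsCurrent C} =>
        ∏ j, ∏ k, ((Real.sqrt (t j * t k) : ℂ) ^ C.1 j k * Q j k ^ C.1 j k /
          (Nat.factorial (C.1 j k) : ℂ))) ∧
    (2 * Real.pi : ℂ) ^ N *
        ∑' C : {C : Matrix (Fin N) (Fin N) ℕ // IsCurrent C},
          ∏ j, ∏ k, ((Real.sqrt (t j * t k) : ℂ) ^ C.1 j k * Q j k ^ C.1 j k /
            (Nat.factorial (C.1 j k) : ℂ)) =
      ∫ θ in Set.pi Set.univ (fun _ : Fin N => Set.Ico (0 : ℝ) (2 * Real.pi)),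
        ∏ j, ∏ k, Complex.exp ((Real.sqrt (t j * t k) : ℂ) * Q j k *
          Complex.exp (Complex.I * ((θ k : ℂ) - (θ j : ℂ)))) := by
  set a : Fin N → Fin N → ℂ := fun j k => (Real.sqrt (t j * t k) : ℂ) * Q j k
  have hcoef (C : Matrix (Fin N) (Fin N) ℕ) :
      ∏ j, ∏ k, ((Real.sqrt (t j * t k) : ℂ) ^ C j k * Q j k ^ C j k / (C j k)!) =
        ∏ j, ∏ k, a j k ^ C j k / (C j k)! := by
    simp only [a, mul_pow]
  have hcurrent : HasSum ({C : Matrix (Fin N) (Fin N) ℕ | IsCurrent C}.indicator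
      fun C => (2 * π : ℂ) ^ N * ∏ j, ∏ k, a j k ^ C j k / (C j k)!)
      (∫ θ in Set.univ.pi fun _ : Fin N => Set.Ico (0 : ℝ) (2 * π),
        ∏ j, ∏ k, cexp (a j k * cexp (I * (θ k - θ j)))) := by
    refine (hasSum_integral_pi_Ico_prod_prod_mul_exp_pow_div_factorial a).congr_fun fun C => ?_
    rw [integral_pi_Ico_prod_prod_mul_exp_pow_div_factorial, Fintype.card_fin]
    classical
    exact if_congr (isCurrent_iff_netFlow_eq_zero C) rfl rfl
  simp only [hcoef]
  refine ⟨(summable_norm_and_hasSum_prod_prod_pow_div_factorial a).2.summable.subtype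
    {C | IsCurrent C}, ?_⟩
  rw [← tsum_mul_left]
  exact (hasSum_subtype_iff_indicator.2 hcurrent).tsum_eq

/-- The key integral identity: `(2π)^N Σ_{C current} ∏_{j,k} (t_j t_k)^{C_{jk}/2}
q_{jk}^{C_{jk}}/C_{jk}! = ∫_{[0,2π)^N} ∏_{j,k} exp(√(t_j t_k) q_{jk} e^{i(θ_k−θ_j)}) dθ`,
the sum (over currents) converging absolutely. -/
theorem current_sum_eq_torus_integral (N : ℕ) (Q : Matrix (Fin N) (Fin N) ℂ)
    (t : Fin N → ℝ) (ht : ∀ j, 0 ≤ t j) :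
    Summable (fun C : {C : Matrix (Fin N) (Fin N) ℕ // IsCurrent C} =>
        ∏ j, ∏ k, ((Real.sqrt (t j * t k) : ℂ) ^ C.1 j k * Q j k ^ C.1 j k /
          (Nat.factorial (C.1 j k) : ℂ))) ∧
    (2 * Real.pi : ℂ) ^ N *
        ∑' C : {C : Matrix (Fin N) (Fin N) ℕ // IsCurrent C},
          ∏ j, ∏ k, ((Real.sqrt (t j * t k) : ℂ) ^ C.1 j k * Q j k ^ C.1 j k /
            (Nat.factorial (C.1 j k) : ℂ)) =
      ∫ θ in Set.pi Set.univ (fun _ : Fin N => Set.Ico (0 : ℝ) (2 * Real.pi)),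
        ∏ j, ∏ k, Complex.exp ((Real.sqrt (t j * t k) : ℂ) * Q j k *
          Complex.exp (Complex.I * ((θ k : ℂ) - (θ j : ℂ)))) :=
  current_sum_eq_torus_integral_general N Q t
end
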